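/- arXiv:1905.07509 — 2 statements merged into one kernel-verified Lean document; each statement's English description precedes it below -/
import Mathlib

section
/- For even n ≥ 2, the conjugate Φ-powers are related by X^(n)(x₀,x) = n ∫_{x₀}^x X̃^(n−1)(ξ,x)/Φ(ξ) dξ; for odd n ≥ 1, X̃^(n)(x₀,x) = n ∫_{x₀}^x Φ(ξ) X^(n−1)(ξ,x) dξ. -/
noncomputable def genX (Φ : ℝ → ℂ) : ℕ → ℝ → ℝ → ℂ
  | 0 => fun _ _ => 1
  | n + 1 => fun x₀ x =>
      (n + 1 : ℕ) * ∫ ξ in x₀..x, genX Φ n x₀ ξ * Φ ξ ^ ((-1 : ℤ) ^ (n + 1))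

noncomputable def genXt (Φ : ℝ → ℂ) : ℕ → ℝ → ℝ → ℂ
  | 0 => fun _ _ => 1
  | n + 1 => fun x₀ x =>
      (n + 1 : ℕ) * ∫ ξ in x₀..x, genXt Φ n x₀ ξ * Φ ξ ^ (-((-1 : ℤ) ^ (n + 1)))

/-!
Unwinding the recursion, `genX Φ n x₀ x` is `n!` times the integral of
`Φ(t₁)⁻¹ Φ(t₂) Φ(t₃)⁻¹ ⋯` over the simplex `x₀ < t₁ < ⋯ < tₙ < x`, and `genXt Φ = genX Φ⁻¹`.
The recursion integrates out the outermost variable `tₙ`; the claimed formulas integrate out the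
innermost one `t₁` instead. By induction on `n` this amounts to one exchange of the order of
integration over a triangle. Since `genX Φ n x₀ x` only sees `Φ` between `x₀` and `x`, it
suffices to treat `Φ` continuous and nonvanishing on all of `ℝ`.
-/

open MeasureTheory intervalIntegral Set Function

section IntervalIntegral

variable {E : Type*} [NormedAddCommGroup E] [NormedSpace ℝ E]

theorem integral_integral_triangle_swap_of_le {f : ℝ → ℝ → E} (hf : Continuous (uncurry f))
    {x₀ x : ℝ} (h : x₀ ≤ x) :
    ∫ ξ in x₀..x, ∫ t in x₀..ξ, f t ξ = ∫ t in x₀..x, ∫ ξ in t..x, f t ξ := by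
  set g : ℝ × ℝ → E := {p : ℝ × ℝ | p.1 ≤ p.2}.indicator (uncurry f)
  have hg : Integrable (uncurry fun ξ t => g (t, ξ))
      ((volume.restrict (Ioc x₀ x)).prod (volume.restrict (Ioc x₀ x))) := by
    have hsq : IntegrableOn (uncurry f) (Icc x₀ x ×ˢ Icc x₀ x) :=
      hf.continuousOn.integrableOn_compact (isCompact_Icc.prod isCompact_Icc)
    rw [Measure.prod_restrict, ← Measure.volume_eq_prod]
    exact ((hsq.mono_set (prod_mono Ioc_subset_Icc_self Ioc_subset_Icc_self)).indicator
      (measurableSet_le measurable_fst measurable_snd)).swap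
  have inner_left : ∀ ξ ∈ Ioc x₀ x, ∫ t in x₀..ξ, f t ξ = ∫ t in Ioc x₀ x, g (t, ξ) := by
    intro ξ hξ
    have : ∀ t, g (t, ξ) = (Iic ξ).indicator (f · ξ) t := fun t => by
      by_cases ht : t ≤ ξ <;> simp [g, indicator, ht]
    simp only [this]
    rw [setIntegral_indicator measurableSet_Iic, Ioc_inter_Iic, min_eq_right hξ.2,
      integral_of_le hξ.1.le]
  have inner_right : ∀ t ∈ Ioc x₀ x, ∫ ξ in t..x, f t ξ = ∫ ξ in Ioc x₀ x, g (t, ξ) := by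
    intro t ht
    have : ∀ ξ, g (t, ξ) = (Ici t).indicator (f t ·) ξ := fun ξ => by
      by_cases hξ : t ≤ ξ <;> simp [g, indicator, hξ]
    have hset : Ioc x₀ x ∩ Ici t = Icc t x := by
      ext ξ
      simp only [mem_inter_iff, mem_Ioc, mem_Ici, mem_Icc]
      constructor
      · rintro ⟨⟨-, hξx⟩, htξ⟩
        exact ⟨htξ, hξx⟩
      · rintro ⟨htξ, hξx⟩
        exact ⟨⟨ht.1.trans_le htξ, hξx⟩, htξ⟩
    simp only [this]
    rw [setIntegral_indicator measurableSet_Ici, hset, integral_Icc_eq_integral_Ioc,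
      integral_of_le ht.2]
  rw [integral_of_le h, integral_of_le h, setIntegral_congr_fun measurableSet_Ioc inner_left,
    setIntegral_congr_fun measurableSet_Ioc inner_right]
  exact integral_integral_swap hg

theorem integral_integral_triangle_swap {f : ℝ → ℝ → E} (hf : Continuous (uncurry f))
    (x₀ x : ℝ) :
    ∫ ξ in x₀..x, ∫ t in x₀..ξ, f t ξ = ∫ t in x₀..x, ∫ ξ in t..x, f t ξ := by
  rcases le_total x₀ x with h | h
  · exact integral_integral_triangle_swap_of_le hf h
  · have := integral_integral_triangle_swap_of_le (f := fun ξ t => f t ξ)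
      (hf.comp continuous_swap) h
    rw [integral_symm x x₀, integral_symm x x₀]
    simp_rw [integral_symm _ x₀, integral_symm x, intervalIntegral.integral_neg, neg_neg]
    exact this.symm

theorem continuous_intervalIntegral_of_continuous_uncurry {X : Type*} [TopologicalSpace X]
    {f : X → ℝ → E} (hf : Continuous (uncurry f)) {a b : X → ℝ} (ha : Continuous a)
    (hb : Continuous b) : Continuous fun p => ∫ ξ in a p..b p, f p ξ := by
  have hint : ∀ p c d, IntervalIntegrable (f p) volume c d := fun p _ _ =>
    (hf.comp (Continuous.prodMk_right p)).intervalIntegrable _ _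
  have hsub : (fun p => ∫ ξ in a p..b p, f p ξ)
      = fun p => (∫ ξ in 0..b p, f p ξ) - ∫ ξ in 0..a p, f p ξ :=
    funext fun p => (integral_interval_sub_left (hint _ 0 _) (hint _ 0 _)).symm
  rw [hsub]
  exact (continuous_parametric_intervalIntegral_of_continuous hf hb).sub
    (continuous_parametric_intervalIntegral_of_continuous hf ha)

end IntervalIntegral

theorem genXt_eq_genX_inv (Φ : ℝ → ℂ) : genXt Φ = genX Φ⁻¹ := by
  funext n
  induction n with
  | zero => rfl
  | succ n ih => funext x₀ x; simp only [genXt, genX, ih, Pi.inv_apply, inv_zpow']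

theorem continuous_genX {Φ : ℝ → ℂ} (hc : Continuous Φ) (h0 : ∀ y, Φ y ≠ 0) (n : ℕ) :
    Continuous fun p : ℝ × ℝ => genX Φ n p.1 p.2 := by
  induction n with
  | zero => exact continuous_const
  | succ n ih =>
    refine continuous_const.mul (continuous_intervalIntegral_of_continuous_uncurry ?_
      continuous_fst continuous_snd)
    exact (ih.comp (continuous_fst.fst.prodMk continuous_snd)).mul
      ((hc.zpow₀ _ fun y => Or.inl (h0 y)).comp continuous_snd)

theorem genX_succ_eq_integral_genX_inv {Φ : ℝ → ℂ} (hc : Continuous Φ) (h0 : ∀ y, Φ y ≠ 0)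
    (n : ℕ) (x₀ x : ℝ) :
    genX Φ (n + 1) x₀ x = (n + 1 : ℕ) * ∫ ξ in x₀..x, genX Φ⁻¹ n ξ x / Φ ξ := by
  induction n generalizing x with
  | zero => simp [genX, div_eq_mul_inv]
  | succ n ih =>
    set e : ℤ := (-1) ^ (n + 2) with he_def
    have he : ∀ ξ, Φ⁻¹ ξ ^ ((-1 : ℤ) ^ (n + 1)) = Φ ξ ^ e := fun ξ => by
      rw [Pi.inv_apply, inv_zpow', he_def, pow_succ _ (n + 1), mul_neg_one]
    set F : ℝ → ℝ → ℂ := fun t ξ => genX Φ⁻¹ n t ξ * Φ ξ ^ e / Φ t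
    have hF : Continuous (uncurry F) :=
      ((continuous_genX (hc.inv₀ h0) (fun y => inv_ne_zero (h0 y)) n).mul
        ((hc.zpow₀ e fun y => Or.inl (h0 y)).comp continuous_snd)).div
        (hc.comp continuous_fst) fun p => h0 p.1
    calc genX Φ (n + 2) x₀ x
        = (n + 2 : ℕ) * ∫ ξ in x₀..x, genX Φ (n + 1) x₀ ξ * Φ ξ ^ e := rfl
      _ = (n + 2 : ℕ) * ∫ ξ in x₀..x, (n + 1 : ℕ) * ∫ t in x₀..ξ, F t ξ := by
          simp_rw [ih, F, mul_assoc, ← intervalIntegral.integral_mul_const, div_mul_eq_mul_div]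
      _ = (n + 2 : ℕ) * ∫ t in x₀..x, (n + 1 : ℕ) * ∫ ξ in t..x, F t ξ := by
          simp_rw [intervalIntegral.integral_const_mul, integral_integral_triangle_swap hF]
      _ = (n + 2 : ℕ) * ∫ t in x₀..x, genX Φ⁻¹ (n + 1) t x / Φ t := by
          simp_rw [F, genX, he, intervalIntegral.integral_div, mul_div_assoc]

theorem genX_congr_of_eqOn {Φ Ψ : ℝ → ℂ} {x₀ x : ℝ} (h : EqOn Φ Ψ (uIcc x₀ x)) (n : ℕ) :
    genX Φ n x₀ x = genX Ψ n x₀ x := by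
  induction n generalizing x with
  | zero => rfl
  | succ n ih =>
    refine congrArg _ (integral_congr fun ξ hξ => ?_)
    rw [ih (h.mono (uIcc_subset_uIcc_left hξ)), h hξ]

theorem genX_succ_eq_integral_genX_inv_of_continuousOn {Φ : ℝ → ℂ} {x₀ x : ℝ}
    (hc : ContinuousOn Φ (uIcc x₀ x)) (h0 : ∀ y ∈ uIcc x₀ x, Φ y ≠ 0) (n : ℕ) :
    genX Φ (n + 1) x₀ x = (n + 1 : ℕ) * ∫ ξ in x₀..x, genX Φ⁻¹ n ξ x / Φ ξ := by
  set Ψ : ℝ → ℂ := IccExtend min_le_max ((uIcc x₀ x).domRestrict Φ)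
  have hΨc : Continuous Ψ := hc.domRestrict.Icc_extend'
  have hΨ0 : ∀ y, Ψ y ≠ 0 := fun y => h0 _ (projIcc _ _ _ y).2
  have hΦΨ : EqOn Φ Ψ (uIcc x₀ x) := fun y hy =>
    (IccExtend_of_mem min_le_max ((uIcc x₀ x).domRestrict Φ) hy).symm
  rw [genX_congr_of_eqOn hΦΨ, genX_succ_eq_integral_genX_inv hΨc hΨ0]
  refine congrArg _ (integral_congr fun ξ hξ => ?_)
  have hξx : EqOn Φ⁻¹ Ψ⁻¹ (uIcc ξ x) := fun y hy => by
    simp only [Pi.inv_apply, hΦΨ (uIcc_subset_uIcc_right hξ hy)]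
  rw [genX_congr_of_eqOn hξx, hΦΨ hξ]

theorem stmt_7 (a b : ℝ) (Φ : ℝ → ℂ) (hΦc : ContinuousOn Φ (Set.Icc a b))
    (hΦ0 : ∀ y ∈ Set.Icc a b, Φ y ≠ 0) (x₀ x : ℝ)
    (hx₀ : x₀ ∈ Set.Icc a b) (hx : x ∈ Set.Icc a b) (n : ℕ) :
    (Even n → 2 ≤ n →
      genX Φ n x₀ x = (n : ℂ) * ∫ ξ in x₀..x, genXt Φ (n - 1) ξ x / Φ ξ) ∧
    (Odd n →
      genXt Φ n x₀ x = (n : ℂ) * ∫ ξ in x₀..x, Φ ξ * genX Φ (n - 1) ξ x) := by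
  have hsub : uIcc x₀ x ⊆ Icc a b := uIcc_subset_Icc hx₀ hx
  have hc : ContinuousOn Φ (uIcc x₀ x) := hΦc.mono hsub
  have h0 : ∀ y ∈ uIcc x₀ x, Φ y ≠ 0 := fun y hy => hΦ0 y (hsub hy)
  rw [genXt_eq_genX_inv]
  refine ⟨fun _ hn => ?_, fun hn => ?_⟩
  · obtain ⟨k, rfl⟩ := Nat.exists_eq_add_of_le' hn
    exact genX_succ_eq_integral_genX_inv_of_continuousOn hc h0 (k + 1)
  · obtain ⟨k, rfl⟩ := Nat.exists_eq_add_of_le' hn.pos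
    have := genX_succ_eq_integral_genX_inv_of_continuousOn (hc.inv₀ h0)
      (fun y hy => inv_ne_zero (h0 y hy)) k
    simpa only [Nat.add_sub_cancel, inv_inv, Pi.inv_apply, div_inv_eq_mul, mul_comm] using this
end

section
/- For all m, n ≥ 1 and all x₀, x ∈ [a,b], the Volterra composition of the first type satisfies (Φ X^(2n−1)) ⋆ X^(2m) = ((2n−1)!(2m)!/(2n+2m)!) X^(2n+2m) and (Φ X^(2n−1)) ⋆ X^(2m−1) = ((2n−1)!(2m−1)!/(2n+2m−1)!) X^(2n+2m−1), where (f ⋆ g)(x₀,x) = ∫_{x₀}^x f(x₀,ξ) g(ξ,x) dξ. -/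
/-- Volterra composition of the first type. -/
noncomputable def volt (f g : ℝ → ℝ → ℂ) (x y : ℝ) : ℂ :=
  ∫ ξ in x..y, f x ξ * g ξ y

/-!
Expanding `X^(k+1)(ξ, x)` as an integral and exchanging the order of integration over the
triangle `x₀ < ξ < η < x` gives, for every `j`,
`((Φ X^(j)) ⋆ X^(k+1))(x₀, x) = (k + 1) ∫_{x₀}^x ((Φ X^(j)) ⋆ X^(k))(x₀, η) Φ(η)^((-1)^(k+1)) dη`.
For odd `j` the exponent `(-1)^(k+1)` is also the one in the recursion defining `X^(j+k+2)`,
so induction on `k` yields a multiple of `X^(j+k+2)`. Continuity on `[a, b]` suffices, since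
`Φ` extends continuously and without zeros to `ℝ` by clamping to `[a, b]`.
-/

open MeasureTheory Set Function intervalIntegral

section TriangleSwap

variable {E : Type*} [NormedAddCommGroup E] [NormedSpace ℝ E]

lemma integral_integral_swap_triangle_of_le {F : ℝ → ℝ → E} (hF : Continuous (uncurry F))
    {a b : ℝ} (hab : a ≤ b) :
    ∫ ξ in a..b, ∫ η in ξ..b, F ξ η = ∫ η in a..b, ∫ ξ in a..η, F ξ η := by
  set G : ℝ → ℝ → E := fun ξ η => {p : ℝ × ℝ | p.1 < p.2}.indicator (uncurry F) (ξ, η)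
  have hG : Integrable (uncurry G)
      ((volume.restrict (Ioc a b)).prod (volume.restrict (Ioc a b))) := by
    rw [Measure.prod_restrict, ← Measure.volume_eq_prod]
    exact ((hF.continuousOn.integrableOn_compact (isCompact_Icc.prod isCompact_Icc)).mono_set
      (prod_mono Ioc_subset_Icc_self Ioc_subset_Icc_self)).indicator
      (measurableSet_lt measurable_fst measurable_snd)
  have h_left : ∀ ξ ∈ Ioc a b, ∫ η in ξ..b, F ξ η = ∫ η in Ioc a b, G ξ η := by
    intro ξ hξ
    have : G ξ = (Ioi ξ).indicator (F ξ) := by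
      ext η; simp [G, indicator_apply]
    rw [this, setIntegral_indicator measurableSet_Ioi, Ioc_inter_Ioi, max_eq_right hξ.1.le,
      integral_of_le hξ.2]
  have h_right : ∀ η ∈ Ioc a b, ∫ ξ in Ioc a b, G ξ η = ∫ ξ in a..η, F ξ η := by
    intro η hη
    have : (fun ξ => G ξ η) = (Iio η).indicator (fun ξ => F ξ η) := by
      ext ξ; simp [G, indicator_apply]
    have h_slice : Ioc a b ∩ Iio η = Ioo a η := by
      ext ξ
      simp only [mem_inter_iff, mem_Ioc, mem_Iio, mem_Ioo]
      exact ⟨fun h => ⟨h.1.1, h.2⟩, fun h => ⟨⟨h.1, h.2.le.trans hη.2⟩, h.2⟩⟩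
    rw [this, setIntegral_indicator measurableSet_Iio, h_slice, integral_of_le hη.1.le,
      integral_Ioc_eq_integral_Ioo]
  calc ∫ ξ in a..b, ∫ η in ξ..b, F ξ η = ∫ ξ in Ioc a b, ∫ η in Ioc a b, G ξ η := by
        rw [integral_of_le hab]; exact setIntegral_congr_fun measurableSet_Ioc h_left
    _ = ∫ η in Ioc a b, ∫ ξ in Ioc a b, G ξ η := integral_integral_swap hG
    _ = ∫ η in a..b, ∫ ξ in a..η, F ξ η := by
        rw [integral_of_le hab]; exact setIntegral_congr_fun measurableSet_Ioc h_right

lemma integral_integral_swap_triangle {F : ℝ → ℝ → E} (hF : Continuous (uncurry F))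
    (a b : ℝ) :
    ∫ ξ in a..b, ∫ η in ξ..b, F ξ η = ∫ η in a..b, ∫ ξ in a..η, F ξ η := by
  rcases le_total a b with hab | hba
  · exact integral_integral_swap_triangle_of_le hF hab
  · -- the case `a ≤ b` for the transposed integrand, with every orientation reversed
    have h := integral_integral_swap_triangle_of_le (F := fun ξ η => F η ξ)
      (hF.comp continuous_swap) hba
    simp only [integral_symm a b] at h
    simp only [integral_symm a, integral_symm _ b, intervalIntegral.integral_neg, neg_neg] at h
    exact h.symm

end TriangleSwap

lemma genX_succ (Φ : ℝ → ℂ) (n : ℕ) (x₀ x : ℝ) :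
    genX Φ (n + 1) x₀ x =
      ((n + 1 : ℕ) : ℂ) * ∫ ξ in x₀..x, genX Φ n x₀ ξ * Φ ξ ^ ((-1 : ℤ) ^ (n + 1)) := rfl

lemma continuous_genX_s18 {Φ : ℝ → ℂ} (hΦ : Continuous Φ) (hΦ0 : ∀ y, Φ y ≠ 0) (n : ℕ) :
    Continuous (uncurry (genX Φ n)) := by
  induction n with
  | zero => exact continuous_const
  | succ n ih =>
    set f : ℝ → ℝ → ℂ := fun x₀ ξ => genX Φ n x₀ ξ * Φ ξ ^ ((-1 : ℤ) ^ (n + 1))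
    have hf : Continuous (uncurry f) :=
      ih.mul ((hΦ.zpow₀ _ fun y => Or.inl (hΦ0 y)).comp continuous_snd)
    -- the parametric continuity lemma fixes the lower limit, so split the integral at `0`
    have h_split : uncurry (genX Φ (n + 1)) =
        fun p => ((n + 1 : ℕ) : ℂ) * ((∫ ξ in 0..p.2, f p.1 ξ) - ∫ ξ in 0..p.1, f p.1 ξ) := by
      ext ⟨x₀, x⟩
      rw [uncurry_apply_pair, genX_succ, integral_interval_sub_left
        ((hf.uncurry_left x₀).intervalIntegrable _ _) ((hf.uncurry_left x₀).intervalIntegrable _ _)]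
    have hf' : Continuous (uncurry fun (p : ℝ × ℝ) ξ => f p.1 ξ) :=
      hf.comp (continuous_fst.fst.prodMk continuous_snd)
    rw [h_split]
    exact continuous_const.mul
      ((continuous_parametric_intervalIntegral_of_continuous hf' continuous_snd).sub
        (continuous_parametric_intervalIntegral_of_continuous hf' continuous_fst))

lemma genX_eq_of_eqOn {Φ Ψ : ℝ → ℂ} {s : Set ℝ} (hs : s.OrdConnected) (h : EqOn Φ Ψ s)
    (n : ℕ) {u v : ℝ} (hu : u ∈ s) (hv : v ∈ s) : genX Φ n u v = genX Ψ n u v := by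
  induction n generalizing v with
  | zero => rfl
  | succ n ih =>
    rw [genX_succ, genX_succ]
    congr 1
    refine integral_congr fun ξ hξ => ?_
    have hξs := hs.uIcc_subset hu hv hξ
    simp only [ih hξs, h hξs]

lemma volt_mul_genX_eq_of_eqOn {Φ Ψ : ℝ → ℂ} {s : Set ℝ} (hs : s.OrdConnected)
    (h : EqOn Φ Ψ s) (j k : ℕ) {x₀ x : ℝ} (hx₀ : x₀ ∈ s) (hx : x ∈ s) :
    volt (fun u v => Φ v * genX Φ j u v) (genX Φ k) x₀ x =
      volt (fun u v => Ψ v * genX Ψ j u v) (genX Ψ k) x₀ x := by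
  refine integral_congr fun ξ hξ => ?_
  have hξs := hs.uIcc_subset hx₀ hx hξ
  simp only [h hξs, genX_eq_of_eqOn hs h _ hx₀ hξs, genX_eq_of_eqOn hs h _ hξs hx]

lemma exists_continuous_ne_zero_eqOn_Icc {Φ : ℝ → ℂ} {a b : ℝ} (hab : a ≤ b)
    (hΦc : ContinuousOn Φ (Icc a b)) (hΦ0 : ∀ y ∈ Icc a b, Φ y ≠ 0) :
    ∃ Ψ : ℝ → ℂ, Continuous Ψ ∧ (∀ y, Ψ y ≠ 0) ∧ EqOn Φ Ψ (Icc a b) :=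
  ⟨fun y => Φ (projIcc a b hab y),
    hΦc.comp_continuous (continuous_subtype_val.comp continuous_projIcc)
      fun y => (projIcc a b hab y).2,
    fun y => hΦ0 _ (projIcc a b hab y).2,
    fun y hy => by simp [projIcc_of_mem hab hy]⟩

lemma volt_mul_genX_succ {Φ : ℝ → ℂ} (hΦ : Continuous Φ) (hΦ0 : ∀ y, Φ y ≠ 0) (j k : ℕ)
    (x₀ x : ℝ) :
    volt (fun u v => Φ v * genX Φ j u v) (genX Φ (k + 1)) x₀ x =
      (k + 1 : ℕ) * ∫ η in x₀..x,
        volt (fun u v => Φ v * genX Φ j u v) (genX Φ k) x₀ η * Φ η ^ ((-1 : ℤ) ^ (k + 1)) := by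
  set e : ℤ := (-1) ^ (k + 1)
  set F : ℝ → ℝ → ℂ := fun ξ η => Φ ξ * genX Φ j x₀ ξ * (genX Φ k ξ η * Φ η ^ e)
  have hF : Continuous (uncurry F) :=
    ((hΦ.comp continuous_fst).mul ((continuous_genX_s18 hΦ hΦ0 j).comp
      (continuous_const.prodMk continuous_fst))).mul
      ((continuous_genX_s18 hΦ hΦ0 k).mul ((hΦ.zpow₀ e fun y => Or.inl (hΦ0 y)).comp continuous_snd))
  calc volt (fun u v => Φ v * genX Φ j u v) (genX Φ (k + 1)) x₀ x
      = (k + 1 : ℕ) * ∫ ξ in x₀..x, ∫ η in ξ..x, F ξ η := by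
        rw [volt, ← intervalIntegral.integral_const_mul]
        refine integral_congr fun ξ _ => ?_
        simp only [genX_succ, F, intervalIntegral.integral_const_mul]
        ring
    _ = (k + 1 : ℕ) * ∫ η in x₀..x, ∫ ξ in x₀..η, F ξ η := by
        rw [integral_integral_swap_triangle hF]
    _ = _ := by
        congr 1
        refine integral_congr fun η _ => ?_
        rw [volt, ← intervalIntegral.integral_mul_const]
        refine integral_congr fun ξ _ => ?_
        simp only [F]
        ring

lemma volt_mul_genX_of_odd {Φ : ℝ → ℂ} (hΦ : Continuous Φ) (hΦ0 : ∀ y, Φ y ≠ 0) {j : ℕ}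
    (hj : Odd j) (k : ℕ) (x₀ x : ℝ) :
    volt (fun u v => Φ v * genX Φ j u v) (genX Φ k) x₀ x =
      (j.factorial * k.factorial / (j + k + 1).factorial : ℂ) * genX Φ (j + k + 1) x₀ x := by
  induction k generalizing x with
  | zero =>
    have h_sign : (-1 : ℤ) ^ (j + 1) = 1 := hj.add_one.neg_one_pow
    have h_coeff :
        (j.factorial * (0 : ℕ).factorial / (j + 0 + 1).factorial : ℂ) * (j + 1 : ℕ) = 1 := by
      rw [add_zero, Nat.factorial_succ, Nat.factorial_zero]
      push_cast
      field_simp [Nat.factorial_ne_zero]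
    rw [add_zero, genX_succ, h_sign, ← mul_assoc, h_coeff]
    simp only [volt, genX, zpow_one, mul_one, one_mul, mul_comm]
  | succ k ih =>
    have h_sign : (-1 : ℤ) ^ (j + k + 1 + 1) = (-1) ^ (k + 1) := by
      rw [add_right_comm j, add_assoc, pow_add, hj.add_one.neg_one_pow, one_mul]
    have h_ne : ((j + k + 1 + 1 : ℕ) : ℂ) ≠ 0 := Nat.cast_ne_zero.mpr (Nat.succ_ne_zero _)
    simp only [volt_mul_genX_succ hΦ hΦ0, ih, mul_assoc, intervalIntegral.integral_const_mul]
    rw [show j + (k + 1) + 1 = j + k + 1 + 1 from rfl, genX_succ, h_sign,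
      Nat.factorial_succ k, Nat.factorial_succ (j + k + 1)]
    simp only [Nat.cast_mul]
    field_simp [Nat.factorial_ne_zero]

theorem stmt_18 (a b : ℝ) (Φ : ℝ → ℂ) (hΦc : ContinuousOn Φ (Set.Icc a b))
    (hΦ0 : ∀ y ∈ Set.Icc a b, Φ y ≠ 0) (n m : ℕ) (hn : 1 ≤ n) (hm : 1 ≤ m)
    (x₀ x : ℝ) (hx₀ : x₀ ∈ Set.Icc a b) (hx : x ∈ Set.Icc a b) :
    volt (fun u v => Φ v * genX Φ (2 * n - 1) u v) (genX Φ (2 * m)) x₀ x =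
      (((2 * n - 1).factorial : ℂ) * ((2 * m).factorial : ℂ) /
        ((2 * n + 2 * m).factorial : ℂ)) * genX Φ (2 * n + 2 * m) x₀ x ∧
    volt (fun u v => Φ v * genX Φ (2 * n - 1) u v) (genX Φ (2 * m - 1)) x₀ x =
      (((2 * n - 1).factorial : ℂ) * ((2 * m - 1).factorial : ℂ) /
        ((2 * n + 2 * m - 1).factorial : ℂ)) * genX Φ (2 * n + 2 * m - 1) x₀ x := by
  obtain ⟨Ψ, hΨc, hΨ0, hΦΨ⟩ :=
    exists_continuous_ne_zero_eqOn_Icc (hx₀.1.trans hx₀.2) hΦc hΦ0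
  have h_odd : Odd (2 * n - 1) := ⟨n - 1, by omega⟩
  have h_volt (k : ℕ) : volt (fun u v => Φ v * genX Φ (2 * n - 1) u v) (genX Φ k) x₀ x =
      ((2 * n - 1).factorial * k.factorial / (2 * n - 1 + k + 1).factorial : ℂ) *
        genX Φ (2 * n - 1 + k + 1) x₀ x := by
    rw [volt_mul_genX_eq_of_eqOn ordConnected_Icc hΦΨ _ _ hx₀ hx,
      volt_mul_genX_of_odd hΨc hΨ0 h_odd, genX_eq_of_eqOn ordConnected_Icc hΦΨ _ hx₀ hx]
  constructor
  · rw [h_volt, show 2 * n - 1 + 2 * m + 1 = 2 * n + 2 * m by omega]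
  · rw [h_volt, show 2 * n - 1 + (2 * m - 1) + 1 = 2 * n + 2 * m - 1 by omega]
end
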